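/- Let ν be a probability measure on a measurable space S and n a positive integer. Let N be a positive integer, R ≥ 1, Λ > 0, and let Θ be a countable nonempty subset of {θ ∈ ℝ^N : ‖θ‖_∞ ≤ R}. Let θ ↦ h_θ assign to each θ ∈ Θ a bounded measurable function on S such that sup_S |h_θ − h_{θ'}| ≤ Λ·‖θ − θ'‖₂ for all θ, θ' ∈ Θ. Set M := sup_{θ∈Θ} sup_S |h_θ| and assume n^{−1/2} ≤ M ≤ 2RΛN. Then the Rademacher complexity of F = {h_θ : θ ∈ Θ} satisfies R_n(F) ≤ 4·n^{−1/2} + 12·n^{−1/2}·M·(N·log(2RΛN·√n))^{1/2}. -/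

import Mathlib

open MeasureTheory Set

noncomputable section

/-- The value `±1` of a Rademacher sign encoded as a Boolean. -/
def sgn (b : Bool) : ℝ := if b then 1 else -1

/-- Joint law of `n` i.i.d. samples from `ν` together with `n` independent
Rademacher signs. -/
def radMeasure {S : Type*} [MeasurableSpace S] (ν : Measure S) (n : ℕ) :
    Measure ((Fin n → S) × (Fin n → Bool)) :=
  (Measure.pi fun _ => ν).prod (Measure.pi fun _ => (PMF.uniformOfFintype Bool).toMeasure)

/-- The Rademacher complexity `R_n(F)`. -/
def radComplexity {S : Type*} [MeasurableSpace S] (ν : Measure S) (n : ℕ)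
    (F : Set (S → ℝ)) : ℝ :=
  ∫ p, sSup ((fun v => (n : ℝ)⁻¹ * ∑ j, sgn (p.2 j) * v (p.1 j)) '' F) ∂(radMeasure ν n)

/-- `T` is an `ε`-cover of `A` with respect to the distance function `dd`. -/
def IsCover {X : Type*} (dd : X → X → ℝ) (A : Set X) (ε : ℝ) (T : Finset X) : Prop :=
  ↑T ⊆ A ∧ ∀ a ∈ A, ∃ t ∈ T, dd a t ≤ ε

/-- The `ε`-covering number of `A` (minimal cardinality of an `ε`-cover, `⊤` if none). -/
def covN {X : Type*} (dd : X → X → ℝ) (A : Set X) (ε : ℝ) : ℕ∞ :=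
  sInf {k : ℕ∞ | ∃ T : Finset X, IsCover dd A ε T ∧ (T.card : ℕ∞) = k}

/-- Sup-norm distance between real-valued functions. -/
def supDist {S : Type*} (f g : S → ℝ) : ℝ := ⨆ x, |f x - g x|

end

/-!
Discretize the class at sup-distance `4 / √n`. The Λ-Lipschitz parametrization turns a Euclidean
`δ`-net of the cube `[-R, R]^N` (a grid with at most `max 1 ((4 R √N / δ) ^ N)` points) into a
`Λ δ`-net of `F`. Replacing each function by its net point costs at most the net scale, and on the
finite net Massart's lemma (Jensen, then Hoeffding's `cosh x ≤ exp (x ^ 2 / 2)`, then optimizing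
the exponent) bounds the expected supremum by `M √(2 log |net| / n)`.
-/

lemma abs_sgn (b : Bool) : |sgn b| = 1 := by cases b <;> simp [sgn]

lemma abs_sum_sgn_mul_le {n : ℕ} (ω : Fin n → Bool) {a : Fin n → ℝ} {M : ℝ}
    (ha : ∀ j, |a j| ≤ M) : |∑ j, sgn (ω j) * a j| ≤ n * M :=
  calc |∑ j, sgn (ω j) * a j| ≤ ∑ j, |sgn (ω j) * a j| := Finset.abs_sum_le_sum_abs _ _
    _ ≤ ∑ _j : Fin n, M := Finset.sum_le_sum fun j _ => by
          rw [abs_mul, abs_sgn, one_mul]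
          exact ha j
    _ = n * M := by simp

lemma le_mul_sqrt_of_forall_mul_le_add_sq {A a r : ℝ} (hr : 0 < r)
    (h : ∀ lam, 0 < lam → lam * A ≤ a + lam ^ 2 * r ^ 2 / 2) : A ≤ r * √(2 * a) := by
  rcases le_or_gt A 0 with hA | hA
  · exact hA.trans (by positivity)
  -- the optimal choice of `lam` is `A / r ^ 2`
  have hopt := h (A / r ^ 2) (by positivity)
  have hsq : (A / r) ^ 2 ≤ 2 * a := by
    rw [div_pow]
    field_simp at hopt ⊢
    nlinarith
  rw [← div_le_iff₀' hr]
  exact Real.le_sqrt_of_sq_le hsq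

lemma inv_natCast_mul_le {n : ℕ} {a b : ℝ} (hb : 0 ≤ b) (h : a ≤ n * b) : (n : ℝ)⁻¹ * a ≤ b :=
  calc (n : ℝ)⁻¹ * a ≤ (n : ℝ)⁻¹ * n * b := by rw [mul_assoc]; gcongr
    _ ≤ b := mul_le_of_le_one_left hb (inv_mul_le_one_of_le₀ le_rfl (Nat.cast_nonneg n))

lemma sqrt_natCast_le_self (N : ℕ) : √(N : ℝ) ≤ N :=
  (Real.sqrt_le_left (Nat.cast_nonneg N)).2 (by exact_mod_cast Nat.le_self_pow two_ne_zero N)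

noncomputable abbrev signMeasure (n : ℕ) : Measure (Fin n → Bool) :=
  Measure.pi fun _ => (PMF.uniformOfFintype Bool).toMeasure

section Massart

variable {n : ℕ} {ι : Type*} {T : Finset ι}

lemma integral_uniformOfFintype_bool (f : Bool → ℝ) :
    ∫ b, f b ∂(PMF.uniformOfFintype Bool).toMeasure = (f true + f false) / 2 := by
  rw [integral_fintype .of_finite, Fintype.sum_bool]
  simp only [Measure.real, PMF.toMeasure_apply_singleton _ _ (measurableSet_singleton _),
    PMF.uniformOfFintype_apply, Fintype.card_bool]
  norm_num
  ring

lemma integral_exp_mul_sum_sgn (lam : ℝ) (a : Fin n → ℝ) :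
    ∫ ω, Real.exp (lam * ∑ j, sgn (ω j) * a j) ∂signMeasure n
      = ∏ j, Real.cosh (lam * a j) := by
  simp_rw [Finset.mul_sum, Real.exp_sum]
  rw [integral_fintype_prod_eq_prod (fun j b => Real.exp (lam * (sgn b * a j)))]
  congr 1 with j
  rw [integral_uniformOfFintype_bool, Real.cosh_eq]
  simp [sgn]

lemma integral_exp_mul_sum_sgn_le (lam : ℝ) (a : Fin n → ℝ) :
    ∫ ω, Real.exp (lam * ∑ j, sgn (ω j) * a j) ∂signMeasure n
      ≤ Real.exp (lam ^ 2 * (∑ j, a j ^ 2) / 2) := by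
  rw [integral_exp_mul_sum_sgn, Finset.mul_sum, Finset.sum_div, Real.exp_sum]
  gcongr with j
  exact (Real.cosh_le_exp_half_sq _).trans_eq (by ring_nf)

lemma mul_integral_sup'_sum_sgn_le (hT : T.Nonempty) (a : ι → Fin n → ℝ) {r : ℝ} (lam : ℝ)
    (ha : ∀ t ∈ T, ∑ j, a t j ^ 2 ≤ r ^ 2) :
    lam * ∫ ω, T.sup' hT (fun t => ∑ j, sgn (ω j) * a t j) ∂signMeasure n
      ≤ Real.log T.card + lam ^ 2 * r ^ 2 / 2 := by
  set Z : (Fin n → Bool) → ι → ℝ := fun ω t => ∑ j, sgn (ω j) * a t j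
  have jensen : Real.exp (lam * ∫ ω, T.sup' hT (Z ω) ∂signMeasure n)
      ≤ ∫ ω, Real.exp (lam * T.sup' hT (Z ω)) ∂signMeasure n := by
    rw [← integral_const_mul]
    exact convexOn_exp.map_integral_le Real.continuous_exp.continuousOn isClosed_univ
      (.of_forall fun _ => Set.mem_univ _) .of_finite .of_finite
  have exp_sup'_le : ∀ ω, Real.exp (lam * T.sup' hT (Z ω)) ≤ ∑ t ∈ T, Real.exp (lam * Z ω t) := by
    intro ω
    obtain ⟨t, ht, hmax⟩ := T.exists_mem_eq_sup' hT (Z ω)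
    rw [hmax]
    exact Finset.single_le_sum (f := fun t => Real.exp (lam * Z ω t))
      (fun _ _ => (Real.exp_pos _).le) ht
  have mgf_le : ∫ ω, Real.exp (lam * T.sup' hT (Z ω)) ∂signMeasure n
      ≤ T.card * Real.exp (lam ^ 2 * r ^ 2 / 2) :=
    calc _ ≤ ∫ ω, ∑ t ∈ T, Real.exp (lam * Z ω t) ∂signMeasure n :=
          integral_mono .of_finite .of_finite exp_sup'_le
      _ = ∑ t ∈ T, ∫ ω, Real.exp (lam * Z ω t) ∂signMeasure n :=
          integral_finsetSum _ fun _ _ => .of_finite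
      _ ≤ ∑ _t ∈ T, Real.exp (lam ^ 2 * r ^ 2 / 2) := by
          gcongr with t ht
          refine (integral_exp_mul_sum_sgn_le lam (a t)).trans ?_
          gcongr
          exact ha t ht
      _ = T.card * Real.exp (lam ^ 2 * r ^ 2 / 2) := by simp
  have hcard : (0 : ℝ) < T.card := by exact_mod_cast hT.card_pos
  rw [← Real.log_exp (lam ^ 2 * r ^ 2 / 2), ← Real.log_mul hcard.ne' (Real.exp_pos _).ne',
    Real.le_log_iff_exp_le (by positivity)]
  exact jensen.trans mgf_le

theorem integral_sup'_sum_sgn_le (hT : T.Nonempty) (a : ι → Fin n → ℝ) {r : ℝ} (hr : 0 < r)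
    (ha : ∀ t ∈ T, ∑ j, a t j ^ 2 ≤ r ^ 2) :
    ∫ ω, T.sup' hT (fun t => ∑ j, sgn (ω j) * a t j) ∂signMeasure n
      ≤ r * √(2 * Real.log T.card) :=
  le_mul_sqrt_of_forall_mul_le_add_sq hr fun lam _ => mul_integral_sup'_sum_sgn_le hT a lam ha

end Massart

lemma IsCover.nonempty {X : Type*} {dd : X → X → ℝ} {A : Set X} {ε : ℝ} {T : Finset X}
    (hT : IsCover dd A ε T) (hA : A.Nonempty) : T.Nonempty :=
  let ⟨a, ha⟩ := hA
  let ⟨t, ht, _⟩ := hT.2 a ha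
  ⟨t, ht⟩

lemma abs_sub_le_supDist {S : Type*} {u v : S → ℝ} {M : ℝ} (hu : ∀ x, |u x| ≤ M)
    (hv : ∀ x, |v x| ≤ M) (x : S) : |u x - v x| ≤ supDist u v :=
  le_ciSup ⟨2 * M, by
    rintro _ ⟨y, rfl⟩
    show |u y - v y| ≤ 2 * M
    linarith [abs_sub (u y) (v y), hu y, hv y]⟩ x

lemma supDist_nonneg {S : Type*} (u v : S → ℝ) : 0 ≤ supDist u v :=
  Real.iSup_nonneg fun _ => abs_nonneg _

lemma IsCover.image_supDist {X S : Type*} [DecidableEq (S → ℝ)] {dd : X → X → ℝ} {Θ : Set X}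
    {δ : ℝ} {T : Finset X} (hT : IsCover dd Θ δ T) (hdd : ∀ θ θ', 0 ≤ dd θ θ') (h : X → S → ℝ)
    {Λ : ℝ} (hΛ : 0 ≤ Λ) (hlip : ∀ θ ∈ Θ, ∀ θ' ∈ Θ, ∀ x, |h θ x - h θ' x| ≤ Λ * dd θ θ') :
    IsCover supDist (h '' Θ) (Λ * δ) (T.image h) := by
  refine ⟨by simpa using Set.image_mono (f := h) hT.1, ?_⟩
  rintro _ ⟨θ, hθ, rfl⟩
  obtain ⟨t, ht, hθt⟩ := hT.2 θ hθ
  refine ⟨h t, Finset.mem_image_of_mem h ht, ?_⟩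
  calc supDist (h θ) (h t) ≤ Λ * dd θ t :=
        Real.iSup_le (hlip θ hθ t (hT.1 ht)) (mul_nonneg hΛ (hdd θ t))
    _ ≤ Λ * δ := by gcongr

lemma exists_isCover_of_mapsTo {X Y : Type*} {dd : X → X → ℝ} {A : Set X} {ε : ℝ} (f : X → Y)
    (K : Finset Y) (hf : MapsTo f A K) (hfiber : ∀ a ∈ A, ∀ b ∈ A, f a = f b → dd a b ≤ ε) :
    ∃ T : Finset X, IsCover dd A ε T ∧ T.card ≤ K.card := by
  classical
  rcases isEmpty_or_nonempty X with hX | hX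
  · exact ⟨∅, ⟨by simp, fun a => isEmptyElim a⟩, by simp⟩
  refine ⟨(K.filter (· ∈ f '' A)).image (Function.invFunOn f A), ⟨?_, ?_⟩, ?_⟩
  · intro t ht
    simp only [Finset.coe_image, Finset.coe_filter, Set.mem_image] at ht
    obtain ⟨_, ⟨-, a, ha, rfl⟩, rfl⟩ := ht
    exact Function.invFunOn_mem ⟨a, ha, rfl⟩
  · intro a ha
    refine ⟨Function.invFunOn f A (f a),
      Finset.mem_image_of_mem _ (Finset.mem_filter.2 ⟨hf ha, a, ha, rfl⟩), ?_⟩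
    exact hfiber a ha _ (Function.invFunOn_mem ⟨a, ha, rfl⟩)
      (Function.invFunOn_eq ⟨a, ha, rfl⟩).symm
  · exact Finset.card_image_le.trans (Finset.card_filter_le _ _)

section Cube

variable {N : ℕ} {Θ : Set (Fin N → ℝ)} {R : ℝ}

noncomputable def euclideanDist (θ θ' : Fin N → ℝ) : ℝ := √(∑ i, (θ i - θ' i) ^ 2)

lemma euclideanDist_le_of_forall_abs_sub_le {θ θ' : Fin N → ℝ} {s : ℝ} (hs : 0 ≤ s)
    (h : ∀ i, |θ i - θ' i| ≤ s) : euclideanDist θ θ' ≤ √N * s := by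
  rw [euclideanDist, ← Real.sqrt_sq hs, ← Real.sqrt_mul (Nat.cast_nonneg N)]
  refine Real.sqrt_le_sqrt ?_
  calc ∑ i, (θ i - θ' i) ^ 2 ≤ ∑ _i : Fin N, s ^ 2 :=
        Finset.sum_le_sum fun i _ => sq_le_sq.2 ((h i).trans (le_abs_self s))
    _ = N * s ^ 2 := by simp

lemma exists_isCover_euclideanDist_grid {s : ℝ} (hR : 0 ≤ R) (hs : 0 < s)
    (hΘ : ∀ θ ∈ Θ, ∀ i, |θ i| ≤ R) :
    ∃ T : Finset (Fin N → ℝ), IsCover euclideanDist Θ (√N * s) T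
      ∧ (T.card : ℝ) ≤ (2 * R / s + 1) ^ N := by
  let cell : (Fin N → ℝ) → Fin N → ℕ := fun θ i => ⌊(θ i + R) / s⌋₊
  have hmaps : MapsTo cell Θ
      (Fintype.piFinset fun _ : Fin N => Finset.range (⌊2 * R / s⌋₊ + 1) : Set (Fin N → ℕ)) := by
    intro θ hθ
    simp only [Finset.mem_coe, Fintype.mem_piFinset, Finset.mem_range]
    intro i
    refine Nat.lt_succ_of_le (Nat.floor_le_floor ?_)
    gcongr
    linarith [(abs_le.1 (hΘ θ hθ i)).2]
  have hfiber : ∀ θ ∈ Θ, ∀ θ' ∈ Θ, cell θ = cell θ' → euclideanDist θ θ' ≤ √N * s := by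
    intro θ hθ θ' hθ' hcell
    refine euclideanDist_le_of_forall_abs_sub_le hs.le fun i => ?_
    have hshift : ∀ φ ∈ Θ, 0 ≤ (φ i + R) / s := fun φ hφ =>
      div_nonneg (by linarith [(abs_le.1 (hΘ φ hφ i)).1]) hs.le
    have hfloor : ⌊(θ i + R) / s⌋ = ⌊(θ' i + R) / s⌋ := by
      rw [← Int.natCast_floor_eq_floor (hshift θ hθ), ← Int.natCast_floor_eq_floor (hshift θ' hθ')]
      exact congrArg _ (congrFun hcell i)
    have hclose := Int.abs_sub_lt_one_of_floor_eq_floor hfloor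
    rw [← sub_div, abs_div, abs_of_pos hs, div_lt_one hs, add_sub_add_right_eq_sub] at hclose
    exact hclose.le
  obtain ⟨T, hT, hcard⟩ := exists_isCover_of_mapsTo cell _ hmaps hfiber
  refine ⟨T, hT, ?_⟩
  calc (T.card : ℝ) ≤ ((⌊2 * R / s⌋₊ + 1 : ℕ) : ℝ) ^ N := by
        exact_mod_cast hcard.trans (by simp)
    _ ≤ (2 * R / s + 1) ^ N := by
        push_cast
        gcongr
        exact Nat.floor_le (by positivity)

theorem exists_isCover_euclideanDist_card_le {δ : ℝ} (hR : 0 ≤ R) (hδ : 0 < δ)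
    (hΘ : ∀ θ ∈ Θ, ∀ i, |θ i| ≤ R) :
    ∃ T : Finset (Fin N → ℝ), IsCover euclideanDist Θ δ T
      ∧ (T.card : ℝ) ≤ max 1 ((4 * R * √N / δ) ^ N) := by
  rcases le_or_gt (2 * R * √N) δ with hsmall | hlarge
  · have hdiam : ∀ θ ∈ Θ, ∀ θ' ∈ Θ, (fun _ => ()) θ = (fun _ => ()) θ' →
        euclideanDist θ θ' ≤ δ := fun θ hθ θ' hθ' _ =>
      (euclideanDist_le_of_forall_abs_sub_le (s := 2 * R) (by positivity) fun i =>
        (abs_sub _ _).trans (by linarith [hΘ θ hθ i, hΘ θ' hθ' i])).trans (by linarith)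
    obtain ⟨T, hT, hcard⟩ :=
      exists_isCover_of_mapsTo _ {()} (fun _ _ => Finset.mem_singleton_self ()) hdiam
    exact ⟨T, hT, le_max_of_le_left (by exact_mod_cast hcard)⟩
  · have hsN : 0 < √N := pos_of_mul_pos_right (hδ.trans hlarge) (by positivity)
    obtain ⟨T, hT, hcard⟩ :=
      exists_isCover_euclideanDist_grid (s := δ / √N) hR (by positivity) hΘ
    rw [mul_div_cancel₀ _ hsN.ne'] at hT
    refine ⟨T, hT, le_max_of_le_right (hcard.trans ?_)⟩
    have hratio : 1 < 2 * R * √N / δ := (one_lt_div hδ).2 hlarge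
    gcongr
    rw [div_div_eq_mul_div]
    linarith [show 4 * R * √N / δ = 2 * (2 * R * √N / δ) by ring]

theorem exists_isCover_supDist_image_card_le {S : Type*} {Λ ε : ℝ} (hR : 0 ≤ R) (hε : 0 < ε)
    (hΛ : 0 < Λ) (hΘ : ∀ θ ∈ Θ, ∀ i, |θ i| ≤ R) {h : (Fin N → ℝ) → S → ℝ}
    (hlip : ∀ θ ∈ Θ, ∀ θ' ∈ Θ, ∀ x, |h θ x - h θ' x| ≤ Λ * euclideanDist θ θ') :
    ∃ 𝒯 : Finset (S → ℝ), IsCover supDist (h '' Θ) ε 𝒯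
      ∧ (𝒯.card : ℝ) ≤ max 1 ((4 * R * Λ * √N / ε) ^ N) := by
  classical
  obtain ⟨T, hT, hcard⟩ := exists_isCover_euclideanDist_card_le (δ := ε / Λ) hR (by positivity) hΘ
  have hcov := hT.image_supDist (fun _ _ => Real.sqrt_nonneg _) h hΛ.le hlip
  rw [mul_div_cancel₀ _ hΛ.ne'] at hcov
  refine ⟨T.image h, hcov, (Nat.cast_le.2 Finset.card_image_le).trans (hcard.trans_eq ?_)⟩
  rw [div_div_eq_mul_div]
  ring_nf

end Cube

section RademacherProcess

variable {S : Type*} {n : ℕ} {F : Set (S → ℝ)} {M : ℝ}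

noncomputable def radSup (n : ℕ) (F : Set (S → ℝ)) (p : (Fin n → S) × (Fin n → Bool)) : ℝ :=
  sSup ((fun v => (n : ℝ)⁻¹ * ∑ j, sgn (p.2 j) * v (p.1 j)) '' F)

lemma radComplexity_eq_integral_radSup [MeasurableSpace S] (ν : Measure S) :
    radComplexity ν n F = ∫ p, radSup n F p ∂radMeasure ν n := rfl

lemma measurable_radSup [MeasurableSpace S] (hF : F.Countable)
    (hmeas : ∀ v ∈ F, Measurable v) : Measurable (radSup n F) := by
  have : Countable F := hF.to_subtype
  have hiSup : radSup n F
      = fun p => ⨆ v : F, (n : ℝ)⁻¹ * ∑ j, sgn (p.2 j) * (v : S → ℝ) (p.1 j) :=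
    funext fun _ => sSup_image'
  rw [hiSup]
  refine Measurable.iSup fun v => .const_mul (Finset.measurable_sum _ fun j _ => ?_) _
  exact ((measurable_from_top (f := sgn)).comp ((measurable_pi_apply j).comp measurable_snd)).mul
    ((hmeas v v.2).comp ((measurable_pi_apply j).comp measurable_fst))

lemma abs_radSup_le (hne : F.Nonempty) (hM : 0 ≤ M) (hb : ∀ v ∈ F, ∀ x, |v x| ≤ M)
    (p : (Fin n → S) × (Fin n → Bool)) : |radSup n F p| ≤ M := by
  have hterm : ∀ v ∈ F, |(n : ℝ)⁻¹ * ∑ j, sgn (p.2 j) * v (p.1 j)| ≤ M := by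
    intro v hv
    rw [abs_mul, abs_inv, Nat.abs_cast]
    exact inv_natCast_mul_le hM (abs_sum_sgn_mul_le p.2 fun j => hb v hv (p.1 j))
  have hbdd : BddAbove ((fun v => (n : ℝ)⁻¹ * ∑ j, sgn (p.2 j) * v (p.1 j)) '' F) :=
    ⟨M, by rintro _ ⟨v, hv, rfl⟩; exact (abs_le.1 (hterm v hv)).2⟩
  obtain ⟨v, hv⟩ := id hne
  refine abs_le.2 ⟨(abs_le.1 (hterm v hv)).1.trans (le_csSup hbdd ⟨v, hv, rfl⟩), ?_⟩
  exact csSup_le (hne.image _) fun _ ⟨w, hw, hval⟩ => hval ▸ (abs_le.1 (hterm w hw)).2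

variable {ε : ℝ} {𝒯 : Finset (S → ℝ)}

lemma radSup_le_add_sup' (hcov : IsCover supDist F ε 𝒯) (h𝒯 : 𝒯.Nonempty)
    (hb : ∀ v ∈ F, ∀ x, |v x| ≤ M) (p : (Fin n → S) × (Fin n → Bool)) :
    radSup n F p ≤ ε + (n : ℝ)⁻¹ * 𝒯.sup' h𝒯 (fun u => ∑ j, sgn (p.2 j) * u (p.1 j)) := by
  obtain ⟨u₀, hu₀⟩ := id h𝒯
  refine csSup_le (Set.Nonempty.image _ ⟨u₀, hcov.1 hu₀⟩) ?_
  rintro _ ⟨v, hv, rfl⟩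
  obtain ⟨u, hu, hvu⟩ := hcov.2 v hv
  have hclose : ∀ x, |v x - u x| ≤ ε := fun x =>
    (abs_sub_le_supDist (hb v hv) (hb u (hcov.1 hu)) x).trans hvu
  have hsplit : ∑ j, sgn (p.2 j) * v (p.1 j)
      = ∑ j, sgn (p.2 j) * u (p.1 j) + ∑ j, sgn (p.2 j) * (v (p.1 j) - u (p.1 j)) := by
    rw [← Finset.sum_add_distrib]
    congr with j
    ring
  have happrox : (n : ℝ)⁻¹ * ∑ j, sgn (p.2 j) * (v (p.1 j) - u (p.1 j)) ≤ ε :=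
    inv_natCast_mul_le ((supDist_nonneg v u).trans hvu)
      ((le_abs_self _).trans (abs_sum_sgn_mul_le p.2 fun j => hclose (p.1 j)))
  have hnet : (n : ℝ)⁻¹ * ∑ j, sgn (p.2 j) * u (p.1 j)
      ≤ (n : ℝ)⁻¹ * 𝒯.sup' h𝒯 (fun u => ∑ j, sgn (p.2 j) * u (p.1 j)) := by
    gcongr
    exact Finset.le_sup' (fun u => ∑ j, sgn (p.2 j) * u (p.1 j)) hu
  dsimp only
  rw [hsplit, mul_add]
  linarith

lemma integral_radSup_le (hn : 0 < n) (hM : 0 < M) (hcov : IsCover supDist F ε 𝒯)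
    (h𝒯 : 𝒯.Nonempty) (hb : ∀ v ∈ F, ∀ x, |v x| ≤ M) (ξ : Fin n → S) :
    ∫ ω, radSup n F (ξ, ω) ∂signMeasure n ≤ ε + M * √(2 * Real.log 𝒯.card) / √n := by
  have hsq : ∀ u ∈ 𝒯, ∑ j, u (ξ j) ^ 2 ≤ (√n * M) ^ 2 := fun u hu =>
    calc ∑ j, u (ξ j) ^ 2 ≤ ∑ _j : Fin n, M ^ 2 := Finset.sum_le_sum fun j _ =>
          sq_le_sq.2 ((hb u (hcov.1 hu) (ξ j)).trans (le_abs_self M))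
      _ = (√n * M) ^ 2 := by rw [mul_pow, Real.sq_sqrt (Nat.cast_nonneg n)]; simp
  have hmassart := integral_sup'_sum_sgn_le h𝒯 (fun u j => u (ξ j)) (by positivity) hsq
  have hsn : (0 : ℝ) < √n := Real.sqrt_pos.2 (by exact_mod_cast hn)
  calc _ ≤ ∫ ω, ε + (n : ℝ)⁻¹ * 𝒯.sup' h𝒯 (fun u => ∑ j, sgn (ω j) * u (ξ j)) ∂signMeasure n :=
        integral_mono .of_finite .of_finite fun ω => radSup_le_add_sup' hcov h𝒯 hb (ξ, ω)
    _ = ε + (n : ℝ)⁻¹ * ∫ ω, 𝒯.sup' h𝒯 (fun u => ∑ j, sgn (ω j) * u (ξ j)) ∂signMeasure n := by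
        rw [integral_add (integrable_const _) .of_finite, integral_const_mul]
        simp
    _ ≤ ε + (n : ℝ)⁻¹ * (√n * M * √(2 * Real.log 𝒯.card)) := by gcongr
    _ = ε + M * √(2 * Real.log 𝒯.card) / √n := by
        have hn2 : (n : ℝ) = √n ^ 2 := (Real.sq_sqrt (Nat.cast_nonneg n)).symm
        generalize √(n : ℝ) = s at hn2 hsn ⊢
        rw [hn2]
        field_simp

theorem radComplexity_le_of_isCover [MeasurableSpace S] (ν : Measure S) [IsProbabilityMeasure ν]
    (hn : 0 < n) (hF : F.Countable) (hne : F.Nonempty) (hmeas : ∀ v ∈ F, Measurable v)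
    (hM : 0 < M) (hb : ∀ v ∈ F, ∀ x, |v x| ≤ M) (hcov : IsCover supDist F ε 𝒯) :
    radComplexity ν n F ≤ ε + M * √(2 * Real.log 𝒯.card) / √n := by
  have hint : Integrable (radSup n F) ((Measure.pi fun _ => ν).prod (signMeasure n)) :=
    .of_bound (measurable_radSup hF hmeas).aestronglyMeasurable M
      (ae_of_all _ (abs_radSup_le hne hM.le hb))
  rw [radComplexity_eq_integral_radSup, radMeasure, integral_prod _ hint]
  calc _ ≤ ∫ _ξ, ε + M * √(2 * Real.log 𝒯.card) / √n ∂Measure.pi fun _ => ν :=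
        integral_mono hint.integral_prod_left (integrable_const _)
          (integral_radSup_le hn hM hcov (hcov.nonempty hne) hb)
    _ = _ := by simp

end RademacherProcess

theorem rademacher_bound_lipschitz_parametrization_general {S : Type*} [MeasurableSpace S]
    (ν : Measure S) (hν : IsProbabilityMeasure ν)
    (n N : ℕ) (hn : 0 < n)
    (R Λ : ℝ) (hR : 1 ≤ R) (hΛ : 0 < Λ)
    (Θ : Set (Fin N → ℝ)) (hΘc : Θ.Countable) (hΘne : Θ.Nonempty)
    (hΘb : ∀ θ ∈ Θ, ∀ i, |θ i| ≤ R)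
    (hmap : (Fin N → ℝ) → S → ℝ)
    (hmeas : ∀ θ ∈ Θ, Measurable (hmap θ))
    (hlip : ∀ θ ∈ Θ, ∀ θ' ∈ Θ, ∀ x,
      |hmap θ x - hmap θ' x| ≤ Λ * Real.sqrt (∑ i, (θ i - θ' i) ^ 2))
    (M : ℝ) (hMb : ∀ θ ∈ Θ, ∀ x, |hmap θ x| ≤ M)
    (hM1 : (n : ℝ) ^ (-(1/2 : ℝ)) ≤ M) (hM2 : M ≤ 2 * R * Λ * N) :
    radComplexity ν n (hmap '' Θ)
      ≤ 4 * (n : ℝ) ^ (-(1/2 : ℝ))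
        + 12 * (n : ℝ) ^ (-(1/2 : ℝ)) * M
          * Real.sqrt (N * Real.log (2 * R * Λ * N * Real.sqrt n)) := by
  have hsn : 0 < √(n : ℝ) := Real.sqrt_pos.2 (by exact_mod_cast hn)
  rw [Real.rpow_neg (Nat.cast_nonneg n), ← Real.sqrt_eq_rpow] at hM1 ⊢
  have hM : 0 < M := (inv_pos.2 hsn).trans_le hM1
  set B := 2 * R * Λ * N * √n
  have hB : 1 ≤ B := calc
    1 ≤ M * √n := (inv_le_iff_one_le_mul₀ hsn).1 hM1
    _ ≤ 2 * R * Λ * N * √n := by gcongr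
  obtain ⟨𝒯, h𝒯, hcard⟩ := exists_isCover_supDist_image_card_le (ε := 4 / √n) (by linarith)
    (by positivity) hΛ hΘb hlip
  have hscale : 4 * R * Λ * √N / (4 / √n) ≤ B := calc
    _ = R * Λ * √n * √N := by field_simp
    _ ≤ R * Λ * √n * (2 * N) := by gcongr; linarith [sqrt_natCast_le_self N]
    _ = B := by ring
  have hlog : Real.log 𝒯.card ≤ N * Real.log B := by
    rw [← Real.log_pow]
    exact Real.log_le_log (by exact_mod_cast (h𝒯.nonempty (hΘne.image hmap)).card_pos)
      (hcard.trans (max_le (one_le_pow₀ hB) (by gcongr)))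
  have hsqrt : √(2 * Real.log 𝒯.card) ≤ 12 * √(N * Real.log B) := by
    have := Real.log_nonneg hB
    rw [← Real.sqrt_sq (show (0 : ℝ) ≤ 12 by norm_num), ← Real.sqrt_mul (by norm_num)]
    exact Real.sqrt_le_sqrt (by nlinarith)
  calc radComplexity ν n (hmap '' Θ) ≤ 4 / √n + M * √(2 * Real.log 𝒯.card) / √n :=
        radComplexity_le_of_isCover ν hn (hΘc.image hmap) (hΘne.image hmap)
          (by rintro _ ⟨θ, hθ, rfl⟩; exact hmeas θ hθ) hM
          (by rintro _ ⟨θ, hθ, rfl⟩; exact hMb θ hθ) h𝒯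
    _ = 4 * (√n)⁻¹ + (√n)⁻¹ * M * √(2 * Real.log 𝒯.card) := by field_simp
    _ ≤ 4 * (√n)⁻¹ + (√n)⁻¹ * M * (12 * √(N * Real.log B)) := by gcongr
    _ = _ := by ring

/-- Rademacher complexity bound for a class parametrized Lipschitz-continuously (in
sup-norm, with respect to the Euclidean parameter distance) by a bounded countable
parameter set in `ℝ^N`, via Dudley's bound and the ball covering number. -/
theorem rademacher_bound_lipschitz_parametrization {S : Type*} [MeasurableSpace S]
    (ν : Measure S) (hν : IsProbabilityMeasure ν)
    (n N : ℕ) (hn : 0 < n) (hN : 0 < N)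
    (R Λ : ℝ) (hR : 1 ≤ R) (hΛ : 0 < Λ)
    (Θ : Set (Fin N → ℝ)) (hΘc : Θ.Countable) (hΘne : Θ.Nonempty)
    (hΘb : ∀ θ ∈ Θ, ∀ i, |θ i| ≤ R)
    (hmap : (Fin N → ℝ) → S → ℝ)
    (hmeas : ∀ θ ∈ Θ, Measurable (hmap θ))
    (hlip : ∀ θ ∈ Θ, ∀ θ' ∈ Θ, ∀ x,
      |hmap θ x - hmap θ' x| ≤ Λ * Real.sqrt (∑ i, (θ i - θ' i) ^ 2))
    (M : ℝ) (hMb : ∀ θ ∈ Θ, ∀ x, |hmap θ x| ≤ M)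
    (hM1 : (n : ℝ) ^ (-(1/2 : ℝ)) ≤ M) (hM2 : M ≤ 2 * R * Λ * N) :
    radComplexity ν n (hmap '' Θ)
      ≤ 4 * (n : ℝ) ^ (-(1/2 : ℝ))
        + 12 * (n : ℝ) ^ (-(1/2 : ℝ)) * M
          * Real.sqrt (N * Real.log (2 * R * Λ * N * Real.sqrt n)) :=
  rademacher_bound_lipschitz_parametrization_general ν hν n N hn R Λ hR hΛ Θ hΘc hΘne hΘb hmap hmeas
    hlip M hMb hM1 hM2
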